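/- Let l ≥ 1 and 0 < b < a. Let (f_n) be a sequence of holomorphic functions on the tube T_a = {λ ∈ ℂ^l : ‖Im λ‖ < a} with sup_n sup_{λ ∈ T_a} |f_n(λ)| < ∞, and suppose f_n converges uniformly on T_a to a function f. Then for every multi-index α ∈ ℕ^l and every integer m ≥ 0, sup_{λ ∈ ℂ^l, ‖Im λ‖ ≤ b} (1 + ‖λ‖²)^m · |∂^α ( exp(−(λ₁² + ⋯ + λ_l²)/2) · (f_n(λ) − f(λ)) )| → 0 as n → ∞, where ∂^α denotes the iterated complex partial derivative in the coordinates λ₁, …, λ_l and ‖λ‖² = |λ₁|² + ⋯ + |λ_l|². -/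

import Mathlib

/-!
Cauchy estimates drive everything. They make the derivatives of `F n` converge uniformly near
each point of `T_a`, so the limit `f` is holomorphic, and then so is
`g_n = e^{-⟨λ,λ⟩/2} (F n - f)`, with `|g_n(w)| ≤ sup_{T_a} |F n - f| · e^{(|Im w|² - |Re w|²)/2}`.
On a small polydisc (a closed ball for the sup norm of `Fin l → ℂ`) around a point `λ` with
`‖Im λ‖ ≤ b` this is at most a constant times `sup_{T_a} |F n - f| · e^{-|Re λ|²/4}`. Applying
the one-variable Cauchy estimate once per derivative, on polydiscs shrinking by `r` each time,
bounds `∂^α g_n(λ)` by the same quantity times `r^{-|α|}`, and the decay `e^{-|Re λ|²/4}`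
absorbs the weight `(1 + ‖λ‖²)^m`.

Partial derivatives of holomorphic functions are again holomorphic because they are Cauchy
integrals over a circle, which depend holomorphically on the base point.
-/

noncomputable section

/-- The open tube domain `T_a = {λ ∈ ℂ^l : ‖Im λ‖ < a}` (Euclidean norm of the
imaginary part). -/
def tube (l : ℕ) (a : ℝ) : Set (Fin l → ℂ) :=
  {lam | Real.sqrt (∑ i, (lam i).im ^ 2) < a}

/-- The complex partial derivative `∂/∂λᵢ` of a function `F : ℂ^l → ℂ`. -/
def pderivC {l : ℕ} (i : Fin l) (F : (Fin l → ℂ) → ℂ) : (Fin l → ℂ) → ℂ :=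
  fun z => fderiv ℂ F z (Pi.single i 1)

/-- The iterated complex partial derivative `∂^α` associated to a multi-index
`α ∈ ℕ^l`: the operator `∂/∂λᵢ` is applied `α i` times for each coordinate `i`. -/
def multiPderiv {l : ℕ} (α : Fin l → ℕ) (F : (Fin l → ℂ) → ℂ) : (Fin l → ℂ) → ℂ :=
  (List.finRange l).foldr (fun i G => (pderivC i)^[α i] G) F

end

open Set Real Metric Filter Topology MeasureTheory
open Complex (I)
open scoped Nat

theorem add_mem_closedBall_of_mem_ball {E : Type*} [SeminormedAddCommGroup E] {z₀ z u : E}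
    {ρ σ : ℝ} (hz : z ∈ ball z₀ ρ) (hu : ‖u‖ ≤ σ) : z + u ∈ closedBall z₀ (ρ + σ) := by
  rw [mem_closedBall, dist_eq_norm, add_sub_right_comm]
  rw [mem_ball, dist_eq_norm] at hz
  linarith [norm_add_le (z - z₀) u]

section CauchyEstimates

variable {E F : Type*} [NormedAddCommGroup E] [NormedSpace ℂ E]
  [NormedAddCommGroup F] [NormedSpace ℂ F]

theorem hasDerivAt_comp_add_smul {h : E → F} {z v : E} {L : E →L[ℂ] F} {u : ℂ}
    (hh : HasFDerivAt h L (z + u • v)) :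
    HasDerivAt (fun t : ℂ => h (z + t • v)) (L v) u := by
  have hline : HasDerivAt (fun t : ℂ => z + t • v) v u := by
    simpa using ((hasDerivAt_id u).smul_const v).const_add z
  exact hh.comp_hasDerivAt u hline

theorem norm_fderiv_le_of_forall_mem_closedBall_norm_le {h : E → F} {z : E} {r M : ℝ}
    (hr : 0 < r) (hd : DifferentiableOn ℂ h (closedBall z r))
    (hM : ∀ w ∈ closedBall z r, ‖h w‖ ≤ M) : ‖fderiv ℂ h z‖ ≤ M / r := by
  have hM0 : 0 ≤ M := (norm_nonneg _).trans (hM z (mem_closedBall_self hr.le))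
  refine ContinuousLinearMap.opNorm_le_bound _ (by positivity) fun v => ?_
  rcases eq_or_ne v 0 with rfl | hv
  · simp
  have hv' : 0 < ‖v‖ := norm_pos_iff.mpr hv
  set R := r / ‖v‖
  have hR : 0 < R := by positivity
  have hmaps : MapsTo (fun t : ℂ => z + t • v) (closedBall 0 R) (closedBall z r) := by
    intro t ht
    rw [mem_closedBall_zero_iff] at ht
    rw [mem_closedBall, dist_self_add_left, norm_smul]
    calc ‖t‖ * ‖v‖ ≤ R * ‖v‖ := by gcongr
      _ = r := div_mul_cancel₀ r hv'.ne'
  have hslice : DiffContOnCl ℂ (fun t : ℂ => h (z + t • v)) (ball 0 R) := by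
    refine DifferentiableOn.diffContOnCl ?_
    rw [closure_ball _ hR.ne']
    exact hd.comp (by fun_prop) hmaps
  have hderiv : deriv (fun t : ℂ => h (z + t • v)) 0 = fderiv ℂ h z v := by
    refine (hasDerivAt_comp_add_smul ?_).deriv
    simpa using (hd.differentiableAt (closedBall_mem_nhds z hr)).hasFDerivAt
  calc ‖fderiv ℂ h z v‖ ≤ M / R := hderiv ▸ Complex.norm_deriv_le_of_forall_mem_sphere_norm_le hR
        hslice fun t ht => hM _ (hmaps (sphere_subset_closedBall ht))
    _ = M / r * ‖v‖ := by simp only [R]; field_simp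

variable [CompleteSpace F]

theorem fderiv_apply_eq_circleIntegral {U : Set E} (hU : IsOpen U) {h : E → F}
    (hh : DifferentiableOn ℂ h U) {z v : E} {R : ℝ} (hR : 0 < R)
    (hsub : ∀ t ∈ closedBall (0 : ℂ) R, z + t • v ∈ U) :
    fderiv ℂ h z v = (2 * π * I)⁻¹ • ∮ t in C(0, R), (1 / (t - 0) ^ 2) • h (z + t • v) := by
  have hslice : DifferentiableOn ℂ (fun t : ℂ => h (z + t • v)) (closedBall 0 R) :=
    hh.comp (by fun_prop) hsub
  have hz : z ∈ U := by simpa using hsub 0 (mem_closedBall_self hR.le)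
  have hderiv : HasDerivAt (fun t : ℂ => h (z + t • v)) (fderiv ℂ h z v) 0 :=
    hasDerivAt_comp_add_smul (by simpa using (hh.differentiableAt (hU.mem_nhds hz)).hasFDerivAt)
  rw [hslice.deriv_eq_smul_circleIntegral hR, inv_smul_smul₀ (by simp [pi_ne_zero]),
    hderiv.deriv]

theorem differentiableAt_circleIntegral_comp_add_smul [FiniteDimensional ℂ E]
    [SecondCountableTopology F] {U : Set E} (hU : IsOpen U) {h : E → F}
    (hh : DifferentiableOn ℂ h U) {z₀ v : E} {R ρ : ℝ} (hR : 0 < R) (hρ : 0 < ρ)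
    (hvR : R * ‖v‖ ≤ ρ) (hball : closedBall z₀ (3 * ρ) ⊆ U) :
    DifferentiableAt ℂ (fun z => ∮ t in C(0, R), (1 / (t - 0) ^ 2) • h (z + t • v)) z₀ := by
  obtain ⟨M, hM⟩ := (isCompact_closedBall z₀ (3 * ρ)).exists_bound_of_continuousOn
    (hh.continuousOn.mono hball)
  have hfderiv_le : ∀ x ∈ closedBall z₀ (2 * ρ), ‖fderiv ℂ h x‖ ≤ M / ρ := fun x hx => by
    have hsub : closedBall x ρ ⊆ closedBall z₀ (3 * ρ) :=
      closedBall_subset_closedBall' (by rw [mem_closedBall] at hx; linarith)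
    exact norm_fderiv_le_of_forall_mem_closedBall_norm_le hρ (hh.mono (hsub.trans hball))
      fun w hw => hM w (hsub hw)
  have hnear : ∀ z ∈ ball z₀ ρ, ∀ θ, z + circleMap 0 R θ • v ∈ closedBall z₀ (2 * ρ) :=
    fun z hz θ => two_mul ρ ▸ add_mem_closedBall_of_mem_ball hz
      (by simpa [norm_smul, abs_of_pos hR] using hvR)
  have hU₂ : closedBall z₀ (2 * ρ) ⊆ U :=
    (closedBall_subset_closedBall (by linarith)).trans hball
  set w : ℝ → ℂ := fun θ => deriv (circleMap 0 R) θ * (1 / (circleMap 0 R θ - 0) ^ 2)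
  set G : E → ℝ → F := fun z θ => w θ • h (z + circleMap 0 R θ • v)
  set G' : E → ℝ → E →L[ℂ] F := fun z θ => w θ • fderiv ℂ h (z + circleMap 0 R θ • v)
  have hw : Continuous w := by
    simp only [w, deriv_circleMap, sub_zero]
    exact (by fun_prop : Continuous fun θ => circleMap 0 R θ * I).mul
      (continuous_const.div (by fun_prop) fun θ => pow_ne_zero 2 (circleMap_ne_center hR.ne'))
  have hw_norm : ∀ θ, ‖w θ‖ = R⁻¹ := fun θ => by
    simp only [w, deriv_circleMap, sub_zero, one_div, Complex.norm_mul, norm_circleMap_zero,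
      abs_of_pos hR, Complex.norm_I, mul_one, norm_inv, norm_pow]
    field_simp
  have hG_cont : ∀ z ∈ ball z₀ ρ, Continuous (G z) := fun z hz =>
    hw.smul ((hh.continuousOn.mono hU₂).comp_continuous (by fun_prop) (hnear z hz))
  have hG' : HasFDerivAt (fun z => ∫ θ in 0..2 * π, G z θ) (∫ θ in 0..2 * π, G' z₀ θ) z₀ := by
    borelize E
    refine intervalIntegral.hasFDerivAt_integral_of_dominated_of_fderiv_le
      (bound := fun _ => R⁻¹ * (M / ρ)) (ball_mem_nhds z₀ hρ) ?_
      ((hG_cont z₀ (mem_ball_self hρ)).intervalIntegrable _ _) ?_ ?_ intervalIntegrable_const ?_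
    · filter_upwards [ball_mem_nhds z₀ hρ] with z hz
      exact (hG_cont z hz).aestronglyMeasurable
    · have : Measurable fun θ => fderiv ℂ h (z₀ + circleMap 0 R θ • v) :=
        (measurable_fderiv ℂ h).comp (by fun_prop : Continuous _).measurable
      exact hw.aestronglyMeasurable.smul this.aestronglyMeasurable
    · refine ae_of_all _ fun θ _ z hz => ?_
      rw [norm_smul, hw_norm]
      gcongr
      exact hfderiv_le _ (hnear z hz θ)
    · refine ae_of_all _ fun θ _ z hz => ?_
      have hd := (hh.differentiableAt (hU.mem_nhds (hU₂ (hnear z hz θ)))).hasFDerivAt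
      exact (hd.comp z ((hasFDerivAt_id z).add_const _)).const_smul (w θ)
  have hG_eq : (fun z => ∮ t in C(0, R), (1 / (t - 0) ^ 2) • h (z + t • v)) =
      fun z => ∫ θ in 0..2 * π, G z θ := by
    funext z
    simp only [circleIntegral, G, w, smul_smul]
  exact hG_eq ▸ hG'.differentiableAt

theorem differentiableOn_fderiv_apply [FiniteDimensional ℂ E] [SecondCountableTopology F]
    {U : Set E} (hU : IsOpen U) {h : E → F} (hh : DifferentiableOn ℂ h U) (v : E) :
    DifferentiableOn ℂ (fun z => fderiv ℂ h z v) U := by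
  intro z₀ hz₀
  obtain ⟨ρ, hρ, hball⟩ : ∃ ρ > 0, closedBall z₀ (3 * ρ) ⊆ U := by
    obtain ⟨ε, hε, hεU⟩ := Metric.isOpen_iff.mp hU z₀ hz₀
    exact ⟨ε / 4, by positivity, (closedBall_subset_ball (by linarith)).trans hεU⟩
  set R := ρ / (‖v‖ + 1)
  have hR : 0 < R := by positivity
  have hvR : R * ‖v‖ ≤ ρ :=
    calc R * ‖v‖ ≤ R * (‖v‖ + 1) := by gcongr; linarith
      _ = ρ := div_mul_cancel₀ ρ (by positivity)
  have hrepr : (fun z => fderiv ℂ h z v) =ᶠ[𝓝 z₀]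
      fun z => (2 * π * I)⁻¹ • ∮ t in C(0, R), (1 / (t - 0) ^ 2) • h (z + t • v) := by
    filter_upwards [ball_mem_nhds z₀ hρ] with z hz
    refine fderiv_apply_eq_circleIntegral hU hh hR fun t ht => hball ?_
    have htv : ‖t • v‖ ≤ ρ := by
      rw [mem_closedBall_zero_iff] at ht
      rw [norm_smul]
      nlinarith [norm_nonneg v]
    exact closedBall_subset_closedBall (by linarith) (add_mem_closedBall_of_mem_ball hz htv)
  exact (((differentiableAt_circleIntegral_comp_add_smul hU hh hR hρ hvR hball).const_smul
    _).congr_of_eventuallyEq hrepr).differentiableWithinAt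

theorem TendstoUniformlyOn.differentiableOn {ι : Type*} {l : Filter ι} [l.NeBot]
    {U : Set E} (hU : IsOpen U) {u : ι → E → F} {f : E → F}
    (hu : ∀ n, DifferentiableOn ℂ (u n) U) (hlim : TendstoUniformlyOn u f l U) :
    DifferentiableOn ℂ f U := by
  intro z hz
  obtain ⟨ρ, hρ, hball⟩ : ∃ ρ > 0, closedBall z (2 * ρ) ⊆ U := by
    obtain ⟨ε, hε, hεU⟩ := Metric.isOpen_iff.mp hU z hz
    exact ⟨ε / 4, by positivity, (closedBall_subset_ball (by linarith)).trans hεU⟩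
  have hsub : ∀ x ∈ ball z ρ, closedBall x ρ ⊆ U := fun x hx =>
    (closedBall_subset_closedBall' (by rw [mem_ball] at hx; linarith)).trans hball
  have hdiffAt : ∀ n, ∀ x ∈ ball z ρ, DifferentiableAt ℂ (u n) x := fun n x hx =>
    (hu n).differentiableAt (hU.mem_nhds (hsub x hx (mem_closedBall_self hρ.le)))
  have hcauchy : UniformCauchySeqOn (fun n => fderiv ℂ (u n)) l (ball z ρ) := by
    intro V hV
    obtain ⟨ε, hε, hεV⟩ := Metric.mem_uniformity_dist.mp hV
    filter_upwards [hlim.uniformCauchySeqOn _ (dist_mem_uniformity (by positivity : 0 < ε * ρ / 2))]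
      with mn hmn x hx
    refine hεV ?_
    rw [dist_eq_norm, ← fderiv_sub (hdiffAt _ x hx) (hdiffAt _ x hx)]
    calc ‖fderiv ℂ (fun y => u mn.1 y - u mn.2 y) x‖ ≤ ε * ρ / 2 / ρ :=
          norm_fderiv_le_of_forall_mem_closedBall_norm_le hρ
            (((hu _).sub (hu _)).mono (hsub x hx))
            fun y hy => by simpa [dist_eq_norm] using (hmn y (hsub x hx hy)).le
      _ < ε := by field_simp; linarith
  have hfderiv : TendstoUniformlyOn (fun n => fderiv ℂ (u n))
      (fun x => limUnder l fun n => fderiv ℂ (u n) x) l (ball z ρ) :=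
    hcauchy.tendstoUniformlyOn_of_tendsto fun x hx =>
      tendsto_nhds_limUnder (CompleteSpace.complete (hcauchy.cauchy_map hx))
  exact (hasFDerivAt_of_tendstoUniformlyOn isOpen_ball hfderiv
    (fun n x hx => (hdiffAt n x hx).hasFDerivAt)
    (fun x hx => hlim.tendsto_at (hsub x hx (mem_closedBall_self hρ.le)))
    (mem_ball_self hρ)).differentiableAt.differentiableWithinAt

end CauchyEstimates

section PartialDerivatives

variable {l : ℕ} {U : Set (Fin l → ℂ)} {h : (Fin l → ℂ) → ℂ}

theorem differentiableOn_foldr_pderivC (hU : IsOpen U) (hh : DifferentiableOn ℂ h U)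
    (L : List (Fin l)) : DifferentiableOn ℂ (L.foldr pderivC h) U := by
  induction L with
  | nil => exact hh
  | cons i L ih => exact differentiableOn_fderiv_apply hU ih (Pi.single i 1)

theorem norm_pderivC_le {z : Fin l → ℂ} {r M : ℝ} (hr : 0 < r)
    (hh : DifferentiableOn ℂ h (closedBall z r)) (hM : ∀ w ∈ closedBall z r, ‖h w‖ ≤ M)
    (i : Fin l) : ‖pderivC i h z‖ ≤ M / r :=
  calc ‖pderivC i h z‖ ≤ ‖fderiv ℂ h z‖ * ‖(Pi.single i 1 : Fin l → ℂ)‖ :=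
        (fderiv ℂ h z).le_opNorm _
    _ ≤ M / r := by
        rw [Pi.norm_single, norm_one, mul_one]
        exact norm_fderiv_le_of_forall_mem_closedBall_norm_le hr hh hM

theorem norm_foldr_pderivC_le (hU : IsOpen U) (hh : DifferentiableOn ℂ h U) {r M : ℝ}
    (hr : 0 < r) (L : List (Fin l)) {z : Fin l → ℂ} (hzU : closedBall z (L.length * r) ⊆ U)
    (hM : ∀ w ∈ closedBall z (L.length * r), ‖h w‖ ≤ M) :
    ‖L.foldr pderivC h z‖ ≤ M / r ^ L.length := by
  induction L generalizing z with
  | nil => simpa using hM z (by simp)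
  | cons i L ih =>
    have hsub : ∀ w ∈ closedBall z r,
        closedBall w (L.length * r) ⊆ closedBall z ((i :: L).length * r) := fun w hw =>
      closedBall_subset_closedBall' (by
        rw [mem_closedBall] at hw; simp only [List.length_cons, Nat.cast_succ]; linarith)
    have hzU' : closedBall z r ⊆ U :=
      (closedBall_subset_closedBall (le_mul_of_one_le_left hr.le (by simp))).trans hzU
    rw [List.foldr_cons, List.length_cons, pow_succ, ← div_div]
    exact norm_pderivC_le hr ((differentiableOn_foldr_pderivC hU hh L).mono hzU')
      (fun w hw => ih ((hsub w hw).trans hzU) fun w' hw' => hM w' (hsub w hw hw')) i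

theorem multiPderiv_eq_foldr (α : Fin l → ℕ) (h : (Fin l → ℂ) → ℂ) :
    multiPderiv α h =
      ((List.finRange l).flatMap fun i => List.replicate (α i) i).foldr pderivC h := by
  unfold multiPderiv
  induction List.finRange l with
  | nil => rfl
  | cons i L ih =>
    rw [List.flatMap_cons, List.foldr_append, List.foldr_cons, ih]
    clear ih
    induction α i with
    | zero => rfl
    | succ k ihk => rw [List.replicate_succ, List.foldr_cons, ← ihk, Function.iterate_succ_apply']

theorem norm_multiPderiv_le (hU : IsOpen U) (hh : DifferentiableOn ℂ h U) {r M : ℝ}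
    (hr : 0 < r) (α : Fin l → ℕ) {z : Fin l → ℂ} (hzU : closedBall z ((∑ i, α i) * r) ⊆ U)
    (hM : ∀ w ∈ closedBall z ((∑ i, α i) * r), ‖h w‖ ≤ M) :
    ‖multiPderiv α h z‖ ≤ M / r ^ ∑ i, α i := by
  have hlen : ((List.finRange l).flatMap fun i => List.replicate (α i) i).length = ∑ i, α i := by
    simp [List.length_flatMap, Fin.sum_univ_def]
  rw [multiPderiv_eq_foldr, ← hlen]
  exact norm_foldr_pderivC_le hU hh hr _ (by rwa [hlen]) (by rwa [hlen])

end PartialDerivatives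

theorem sqrt_sum_sq_add_le {ι : Type*} [Fintype ι] (x y : ι → ℝ) :
    √(∑ i, (x i + y i) ^ 2) ≤ √(∑ i, x i ^ 2) + √(∑ i, y i ^ 2) := by
  have key : ∀ u : ι → ℝ, √(∑ i, u i ^ 2) = ‖(WithLp.toLp 2 u : EuclideanSpace ℝ ι)‖ :=
    fun u => by simp [EuclideanSpace.norm_eq]
  calc √(∑ i, (x i + y i) ^ 2) = ‖(WithLp.toLp 2 (x + y) : EuclideanSpace ℝ ι)‖ := key (x + y)
    _ ≤ √(∑ i, x i ^ 2) + √(∑ i, y i ^ 2) := by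
      rw [WithLp.toLp_add, key, key]
      exact norm_add_le _ _

theorem pow_le_factorial_div_pow_mul_exp {x t : ℝ} (hx : 0 ≤ x) (ht : 0 < t) (m : ℕ) :
    x ^ m ≤ m ! / t ^ m * exp (t * x) := by
  have := Real.pow_div_factorial_le_exp _ (mul_nonneg ht.le hx) m
  rw [div_le_iff₀ (by positivity), mul_pow] at this
  rw [div_mul_eq_mul_div, le_div_iff₀ (by positivity)]
  linarith

section Gaussian

variable {ι : Type*} [Fintype ι]

theorem sum_norm_sq_eq_sum_re_sq_add_sum_im_sq (z : ι → ℂ) :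
    ∑ i, ‖z i‖ ^ 2 = ∑ i, (z i).re ^ 2 + ∑ i, (z i).im ^ 2 := by
  rw [← Finset.sum_add_distrib]
  congr 1 with i
  rw [Complex.sq_norm, Complex.normSq_apply]
  ring

theorem norm_cexp_neg_sum_sq_div_two (z : ι → ℂ) :
    ‖Complex.exp (-(∑ i, z i ^ 2) / 2)‖ = exp ((∑ i, (z i).im ^ 2 - ∑ i, (z i).re ^ 2) / 2) := by
  rw [Complex.norm_exp]
  congr 1
  simp [Complex.re_sum, sq]

end Gaussian

section Tube

variable {l : ℕ}

theorem isOpen_tube (a : ℝ) : IsOpen (tube l a) :=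
  isOpen_lt (by fun_prop) continuous_const

theorem closedBall_subset_tube {z : Fin l → ℂ} {a b ρ : ℝ} (hz : √(∑ i, (z i).im ^ 2) ≤ b)
    (hρ : 0 ≤ ρ) (hab : b + √l * ρ < a) : closedBall z ρ ⊆ tube l a := by
  intro w hw
  have hcoord : ∀ i, ((w i).im - (z i).im) ^ 2 ≤ ρ ^ 2 := fun i => by
    rw [← Complex.sub_im, ← sq_abs]
    have hi : dist (w i) (z i) ≤ ρ := (dist_le_pi_dist w z i).trans hw
    rw [Complex.dist_eq] at hi
    exact pow_le_pow_left₀ (abs_nonneg _) ((Complex.abs_im_le_norm _).trans hi) 2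
  have hdist : √(∑ i, ((w i).im - (z i).im) ^ 2) ≤ √l * ρ :=
    calc _ ≤ √(∑ _i : Fin l, ρ ^ 2) := Real.sqrt_le_sqrt (Finset.sum_le_sum fun i _ => hcoord i)
      _ = √l * ρ := by simp [Real.sqrt_sq hρ]
  calc √(∑ i, (w i).im ^ 2) = √(∑ i, ((z i).im + ((w i).im - (z i).im)) ^ 2) := by simp
    _ ≤ √(∑ i, (z i).im ^ 2) + √(∑ i, ((w i).im - (z i).im) ^ 2) := sqrt_sum_sq_add_le _ _
    _ < a := by linarith

theorem sum_re_sq_le_of_mem_closedBall {z w : Fin l → ℂ} {ρ : ℝ} (hw : w ∈ closedBall z ρ) :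
    ∑ i, (z i).re ^ 2 ≤ 2 * ∑ i, (w i).re ^ 2 + 2 * l * ρ ^ 2 := by
  have hcoord : ∀ i, (z i).re ^ 2 ≤ 2 * (w i).re ^ 2 + 2 * ρ ^ 2 := fun i => by
    have hi : dist (w i) (z i) ≤ ρ := (dist_le_pi_dist w z i).trans hw
    rw [Complex.dist_eq] at hi
    have hre := (Complex.abs_re_le_norm (w i - z i)).trans hi
    rw [Complex.sub_re] at hre
    nlinarith [abs_le.mp hre, sq_nonneg ((w i).re + ((w i).re - (z i).re))]
  calc ∑ i, (z i).re ^ 2 ≤ ∑ i, (2 * (w i).re ^ 2 + 2 * ρ ^ 2) :=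
        Finset.sum_le_sum fun i _ => hcoord i
    _ = 2 * ∑ i, (w i).re ^ 2 + 2 * l * ρ ^ 2 := by
        rw [Finset.sum_add_distrib, ← Finset.mul_sum, Finset.sum_const, Finset.card_univ,
          Fintype.card_fin, nsmul_eq_mul]
        ring

theorem norm_cexp_neg_sum_sq_div_two_le_of_mem_closedBall {z w : Fin l → ℂ} {a b ρ : ℝ}
    (hz : √(∑ i, (z i).im ^ 2) ≤ b) (hρ : 0 ≤ ρ) (hab : b + √l * ρ < a)
    (hw : w ∈ closedBall z ρ) :
    ‖Complex.exp (-(∑ i, w i ^ 2) / 2)‖ ≤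
      exp (a ^ 2 / 2 + l * ρ ^ 2 / 2) * exp (-(∑ i, (z i).re ^ 2) / 4) := by
  have him : ∑ i, (w i).im ^ 2 < a ^ 2 :=
    Real.lt_sq_of_sqrt_lt (closedBall_subset_tube hz hρ hab hw)
  have hre := sum_re_sq_le_of_mem_closedBall hw
  rw [norm_cexp_neg_sum_sq_div_two, ← Real.exp_add]
  gcongr
  linarith

theorem one_add_sum_norm_sq_pow_mul_exp_le {z : Fin l → ℂ} {b : ℝ}
    (hz : √(∑ i, (z i).im ^ 2) ≤ b) (m : ℕ) :
    (1 + ∑ i, ‖z i‖ ^ 2) ^ m * exp (-(∑ i, (z i).re ^ 2) / 4) ≤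
      4 ^ m * m ! * exp ((1 + b ^ 2) / 4) := by
  have him : ∑ i, (z i).im ^ 2 ≤ b ^ 2 := (Real.sqrt_le_iff.mp hz).2
  calc (1 + ∑ i, ‖z i‖ ^ 2) ^ m * exp (-(∑ i, (z i).re ^ 2) / 4)
      ≤ m ! / (1 / 4) ^ m * exp (1 / 4 * (1 + ∑ i, ‖z i‖ ^ 2)) *
          exp (-(∑ i, (z i).re ^ 2) / 4) := by
        gcongr
        exact pow_le_factorial_div_pow_mul_exp (by positivity) (by norm_num) m
    _ ≤ m ! / (1 / 4) ^ m * exp (1 / 4 * (1 + b ^ 2 + ∑ i, (z i).re ^ 2)) *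
          exp (-(∑ i, (z i).re ^ 2) / 4) := by
        gcongr _ * exp (1 / 4 * ?_) * _
        rw [sum_norm_sq_eq_sum_re_sq_add_sum_im_sq]
        linarith
    _ = 4 ^ m * m ! * exp ((1 + b ^ 2) / 4) := by
        rw [mul_assoc, ← Real.exp_add, one_div_pow, one_div, div_inv_eq_mul]
        ring_nf

end Tube

theorem exists_weighted_norm_multiPderiv_gaussian_mul_le {l : ℕ} {a b : ℝ} (hba : b < a)
    (α : Fin l → ℕ) (m : ℕ) :
    ∃ C : ℝ, ∀ u : (Fin l → ℂ) → ℂ, DifferentiableOn ℂ u (tube l a) →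
      ∀ δ : ℝ, (∀ w ∈ tube l a, ‖u w‖ ≤ δ) → ∀ z : Fin l → ℂ, √(∑ i, (z i).im ^ 2) ≤ b →
        (1 + ∑ i, ‖z i‖ ^ 2) ^ m *
          ‖multiPderiv α (fun w => Complex.exp (-(∑ i, w i ^ 2) / 2) * u w) z‖ ≤ C * δ := by
  set K := ∑ i, α i
  obtain ⟨ρ, hρ, hab⟩ : ∃ ρ > 0, b + √l * ρ < a := by
    refine ⟨(a - b) / (√l + 1), div_pos (by linarith) (by positivity), ?_⟩
    rw [← lt_sub_iff_add_lt', mul_div_assoc', div_lt_iff₀ (by positivity)]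
    nlinarith
  obtain ⟨r, hr, hKr⟩ : ∃ r > 0, K * r ≤ ρ := by
    refine ⟨ρ / (K + 1), by positivity, ?_⟩
    rw [mul_div_assoc', div_le_iff₀ (by positivity)]
    nlinarith
  have hball : ∀ z : Fin l → ℂ, closedBall z (K * r) ⊆ closedBall z ρ := fun z =>
    closedBall_subset_closedBall hKr
  refine ⟨exp (a ^ 2 / 2 + l * ρ ^ 2 / 2) / r ^ K * (4 ^ m * m ! * exp ((1 + b ^ 2) / 4)),
    fun u hu δ hδ z hz => ?_⟩
  set g := fun w => Complex.exp (-(∑ i, w i ^ 2) / 2) * u w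
  have hg : DifferentiableOn ℂ g (tube l a) :=
    (by fun_prop : Differentiable ℂ fun w : Fin l → ℂ => Complex.exp (-(∑ i, w i ^ 2) / 2))
      |>.differentiableOn.mul hu
  have hδ0 : 0 ≤ δ := (norm_nonneg _).trans (hδ z (show √(∑ i, (z i).im ^ 2) < a by linarith))
  have hg_le : ∀ w ∈ closedBall z (K * r), ‖g w‖ ≤
      δ * exp (a ^ 2 / 2 + l * ρ ^ 2 / 2) * exp (-(∑ i, (z i).re ^ 2) / 4) := fun w hw => by
    rw [norm_mul, mul_comm, mul_assoc]
    exact mul_le_mul (hδ w (closedBall_subset_tube hz hρ.le hab (hball z hw)))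
      (norm_cexp_neg_sum_sq_div_two_le_of_mem_closedBall hz hρ.le hab (hball z hw))
      (norm_nonneg _) hδ0
  calc (1 + ∑ i, ‖z i‖ ^ 2) ^ m * ‖multiPderiv α g z‖
      ≤ (1 + ∑ i, ‖z i‖ ^ 2) ^ m * (δ * exp (a ^ 2 / 2 + l * ρ ^ 2 / 2) *
          exp (-(∑ i, (z i).re ^ 2) / 4) / r ^ K) := by
        gcongr
        exact norm_multiPderiv_le (isOpen_tube a) hg hr α
          ((hball z).trans (closedBall_subset_tube hz hρ.le hab)) hg_le
    _ = δ * (exp (a ^ 2 / 2 + l * ρ ^ 2 / 2) / r ^ K) *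
          ((1 + ∑ i, ‖z i‖ ^ 2) ^ m * exp (-(∑ i, (z i).re ^ 2) / 4)) := by ring
    _ ≤ δ * (exp (a ^ 2 / 2 + l * ρ ^ 2 / 2) / r ^ K) *
          (4 ^ m * m ! * exp ((1 + b ^ 2) / 4)) :=
        mul_le_mul_of_nonneg_left (one_add_sum_norm_sq_pow_mul_exp_le hz m) (by positivity)
    _ = _ := by ring

theorem gaussian_weighted_seminorm_convergence_general {l : ℕ}
    {a b : ℝ} (hba : b < a)
    (F : ℕ → (Fin l → ℂ) → ℂ) (f : (Fin l → ℂ) → ℂ)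
    (hhol : ∀ n, DifferentiableOn ℂ (F n) (tube l a))
    (hconv : TendstoUniformlyOn F f Filter.atTop (tube l a)) :
    ∀ (α : Fin l → ℕ) (m : ℕ), ∀ ε > (0 : ℝ), ∃ N : ℕ, ∀ n ≥ N,
      ∀ lam : Fin l → ℂ, Real.sqrt (∑ i, (lam i).im ^ 2) ≤ b →
        (1 + ∑ i, ‖lam i‖ ^ 2) ^ m *
          ‖multiPderiv α
            (fun z => Complex.exp (-(∑ i, z i ^ 2) / 2) * (F n z - f z)) lam‖ < ε := by
  intro α m ε hε
  have hf : DifferentiableOn ℂ f (tube l a) := hconv.differentiableOn (isOpen_tube a) hhol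
  obtain ⟨C, hC⟩ := exists_weighted_norm_multiPderiv_gaussian_mul_le hba α m
  obtain ⟨N, hN⟩ := eventually_atTop.mp
    (Metric.tendstoUniformlyOn_iff.mp hconv (ε / (|C| + 1)) (by positivity))
  refine ⟨N, fun n hn z hz => ?_⟩
  calc _ ≤ C * (ε / (|C| + 1)) := hC _ ((hhol n).sub hf) _
          (fun w hw => by simpa [dist_eq_norm, norm_sub_rev] using (hN n hn w hw).le) z hz
    _ < ε := by
        rw [mul_div_assoc', div_lt_iff₀ (by positivity)]
        nlinarith [le_abs_self C]

/-- If `(f_n)` are holomorphic on `T_a`, uniformly bounded there, and converge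
uniformly on `T_a` to `f`, then for every multi-index `α` and every `m ≥ 0`,
`sup_{‖Im λ‖ ≤ b} (1 + ‖λ‖²)^m · |∂^α (exp(−(λ₁²+⋯+λ_l²)/2) · (f_n(λ) − f(λ)))| → 0`
as `n → ∞`, for every `0 < b < a`. -/
theorem gaussian_weighted_seminorm_convergence {l : ℕ} (hl : 1 ≤ l)
    {a b : ℝ} (hb : 0 < b) (hba : b < a)
    (F : ℕ → (Fin l → ℂ) → ℂ) (f : (Fin l → ℂ) → ℂ)
    (hhol : ∀ n, DifferentiableOn ℂ (F n) (tube l a))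
    (hbdd : ∃ C : ℝ, ∀ n, ∀ lam ∈ tube l a, ‖F n lam‖ ≤ C)
    (hconv : TendstoUniformlyOn F f Filter.atTop (tube l a)) :
    ∀ (α : Fin l → ℕ) (m : ℕ), ∀ ε > (0 : ℝ), ∃ N : ℕ, ∀ n ≥ N,
      ∀ lam : Fin l → ℂ, Real.sqrt (∑ i, (lam i).im ^ 2) ≤ b →
        (1 + ∑ i, ‖lam i‖ ^ 2) ^ m *
          ‖multiPderiv α
            (fun z => Complex.exp (-(∑ i, z i ^ 2) / 2) * (F n z - f z)) lam‖ < ε :=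
  gaussian_weighted_seminorm_convergence_general hba F f hhol hconv
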